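/- For d = 3, there exist constants c, C > 0 such that for all μ with 0 < μ ≤ 1, if u ∈ H¹(ℝ³) is nonzero with K(u) = 0 and ‖u‖_{H¹} ≤ M, then 1 ≲ ‖u‖_{L⁶}⁶: precisely, from the Sobolev inequality ‖u‖_{L⁶}² ≤ C‖∇u‖² and the constraint 2‖∇u‖² = μ(3(p-1)/(p+1))‖u‖_{p+1}^{p+1} + 2‖u‖_{L⁶}⁶ together with ‖u‖_{p+1}^{p+1} ≤ C(M)‖u‖_{L⁶}^{3(p-1)/2}, one deduces ‖u‖_{L⁶}⁶ ≥ c for a constant c depending only on p, M and the Sobolev constant. -/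

import Mathlib

open MeasureTheory Filter Asymptotics Real Topology

noncomputable section

abbrev Ed (d : ℕ) : Type := EuclideanSpace ℝ (Fin d)

/-- squared L² norm -/
def l2sq (d : ℕ) (u : Ed d → ℝ) : ℝ := ∫ x : Ed d, (u x) ^ 2

/-- squared L² norm of the gradient -/
def gradsq (d : ℕ) (u : Ed d → ℝ) : ℝ := ∫ x : Ed d, ‖fderiv ℝ u x‖ ^ 2

/-- ∫ |u|^q -/
def lpInt (d : ℕ) (q : ℝ) (u : Ed d → ℝ) : ℝ := ∫ x : Ed d, |u x| ^ q

/-- critical Sobolev exponent 2* = 2d/(d-2) -/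
def twoStar (d : ℕ) : ℝ := 2 * (d : ℝ) / ((d : ℝ) - 2)

/-- membership in H¹(ℝᵈ) -/
def H1 (d : ℕ) (u : Ed d → ℝ) : Prop :=
  MemLp u 2 (volume : Measure (Ed d)) ∧ Differentiable ℝ u ∧
    MemLp (fun x => ‖fderiv ℝ u x‖) 2 (volume : Measure (Ed d))

/-- L²-scaling operator (T_λ u)(x) = λ^{d/2} u(λ x) -/
def Tscal (d : ℕ) (lam : ℝ) (u : Ed d → ℝ) : Ed d → ℝ :=
  fun x => lam ^ ((d : ℝ) / 2) * u (lam • x)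

/-- the action S_ω -/
def Sfun (d : ℕ) (ω μ p : ℝ) (u : Ed d → ℝ) : ℝ :=
  ω * l2sq d u + gradsq d u - (2 * μ / (p + 1)) * lpInt d (p + 1) u
    - (((d : ℝ) - 2) / (d : ℝ)) * lpInt d (twoStar d) u

/-- the functional K -/
def Kfun (d : ℕ) (μ p : ℝ) (u : Ed d → ℝ) : ℝ :=
  2 * gradsq d u - μ * ((d : ℝ) * (p - 1) / (p + 1)) * lpInt d (p + 1) u
    - 2 * lpInt d (twoStar d) u

/-- the functional I_ω -/
def Ifun (d : ℕ) (ω p : ℝ) (u : Ed d → ℝ) : ℝ :=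
  ω * l2sq d u + (((d : ℝ) * (p - 1) - 4) / ((d : ℝ) * (p - 1))) * gradsq d u
    + ((4 - ((d : ℝ) - 2) * (p - 1)) / ((d : ℝ) * (p - 1))) * lpInt d (twoStar d) u

/-- admissible class: nonzero H¹ functions (lying also in L^{p+1} and L^{2*}) -/
def adm (d : ℕ) (p : ℝ) (u : Ed d → ℝ) : Prop :=
  H1 d u ∧ ¬ (u =ᵐ[(volume : Measure (Ed d))] 0) ∧
    MemLp u (ENNReal.ofReal (p + 1)) (volume : Measure (Ed d)) ∧
    MemLp u (ENNReal.ofReal (twoStar d)) (volume : Measure (Ed d))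

/-- the variational value m_ω -/
def mOmega (d : ℕ) (ω μ p : ℝ) : ℝ :=
  sInf {y | ∃ u : Ed d → ℝ, adm d p u ∧ Kfun d μ p u = 0 ∧ y = Sfun d ω μ p u}

/-- the variational value m̃_ω -/
def mTilde (d : ℕ) (ω μ p : ℝ) : ℝ :=
  sInf {y | ∃ u : Ed d → ℝ, adm d p u ∧ Kfun d μ p u ≤ 0 ∧ y = Ifun d ω p u}

/-- best Sobolev constant σ -/
def sobolev (d : ℕ) : ℝ :=
  sInf {y | ∃ u : Ed d → ℝ, Differentiable ℝ u ∧ lpInt d (twoStar d) u = 1 ∧ y = gradsq d u}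

/-- Laplacian -/
def lap (d : ℕ) (u : Ed d → ℝ) (x : Ed d) : ℝ :=
  ∑ i : Fin d, fderiv ℝ (fun y => fderiv ℝ u y (EuclideanSpace.single i 1)) x
    (EuclideanSpace.single i 1)

open scoped ENNReal

/-!
Write `x = ‖u‖₆⁶` and `θ = (p - 1) / 4 ∈ (1/3, 1)`.

Sobolev: apply the L¹ Gagliardo–Nirenberg inequality `‖w‖_{3/2} ≤ ‖∇w‖₁` to `w = u⁴`. That
inequality comes from the fundamental theorem of calculus along coordinate lines and the
Loomis–Whitney grid-lines inequality. Since `|∇w| = 4|u|³|∇u|`, Cauchy–Schwarz then gives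
`x^{1/3} ≤ 16 ‖∇u‖₂²`.

Hölder interpolation between `L²` and `L⁶` gives `‖u‖_{p+1}^{p+1} ≤ M^{(5-p)/2} x^θ`. Putting both
into `K(u) = 0` with `μ ≤ 1` yields `x^{1/3} ≤ A x^θ + 16 x`, and because both exponents exceed
`1/3`, this forces `x ≥ min 1 ((A + 16)^{-1/(θ - 1/3)})`.
-/

theorem lintegral_rpow_interpolate {α : Type*} [MeasurableSpace α] {μ : Measure α}
    {f : α → ℝ≥0∞} (hf : AEMeasurable f μ) {a b θ : ℝ} (ha : 0 ≤ a) (hb : 0 ≤ b)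
    (hθ₀ : 0 ≤ θ) (hθ₁ : θ ≤ 1) :
    ∫⁻ x, f x ^ ((1 - θ) * a + θ * b) ∂μ
      ≤ (∫⁻ x, f x ^ a ∂μ) ^ (1 - θ) * (∫⁻ x, f x ^ b ∂μ) ^ θ := by
  have hsplit : ∀ x, f x ^ ((1 - θ) * a + θ * b) = (f x ^ a) ^ (1 - θ) * (f x ^ b) ^ θ := by
    intro x
    rw [← ENNReal.rpow_mul, ← ENNReal.rpow_mul, mul_comm a, mul_comm b,
      ENNReal.rpow_add_of_nonneg _ _ (by nlinarith) (by positivity)]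
  simp_rw [hsplit]
  exact ENNReal.lintegral_mul_norm_pow_le (hf.pow_const a) (hf.pow_const b)
    (by linarith) hθ₀ (by ring)

theorem integral_norm_rpow_eq_toReal_lintegral {α E : Type*} [MeasurableSpace α]
    {μ : Measure α} [NormedAddCommGroup E] {f : α → E} (hf : AEStronglyMeasurable f μ)
    {q : ℝ} (hq : 0 ≤ q) :
    ∫ x, ‖f x‖ ^ q ∂μ = (∫⁻ x, ‖f x‖ₑ ^ q ∂μ).toReal := by
  rw [← integral_toReal (hf.enorm.pow_const q)
    (ae_of_all _ fun x => ENNReal.rpow_lt_top_of_nonneg hq enorm_ne_top)]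
  simp_rw [← ENNReal.toReal_rpow, toReal_enorm]

theorem lintegral_enorm_rpow_ne_top {α E : Type*} [MeasurableSpace α] {μ : Measure α}
    [NormedAddCommGroup E] {f : α → E} {q : ℝ} (hf : MemLp f (ENNReal.ofReal q) μ)
    (hq : 0 < q) : ∫⁻ x, ‖f x‖ₑ ^ q ∂μ ≠ ∞ := by
  have := lintegral_rpow_enorm_lt_top_of_eLpNorm_lt_top (by simpa using hq)
    ENNReal.ofReal_ne_top hf.eLpNorm_lt_top
  rw [ENNReal.toReal_ofReal hq.le] at this
  exact this.ne

theorem exists_le_lt_of_lintegral_ofReal_ne_top {g : ℝ → ℝ}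
    (hg : ∫⁻ t, ENNReal.ofReal (g t) ≠ ∞) (t₀ : ℝ) {δ : ℝ} (hδ : 0 < δ) :
    ∃ a ≤ t₀, g a < δ := by
  by_contra! h
  refine hg (top_le_iff.mp ?_)
  calc ∞ = ∫⁻ _ in Set.Iic t₀, ENNReal.ofReal δ := by simp [Real.volume_Iic, hδ]
    _ ≤ ∫⁻ t in Set.Iic t₀, ENNReal.ofReal (g t) :=
        setLIntegral_mono' measurableSet_Iic fun a ha => ENNReal.ofReal_le_ofReal (h a ha)
    _ ≤ ∫⁻ t, ENNReal.ofReal (g t) := setLIntegral_le_lintegral _ _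

/-- Since `∫ g⁺ < ∞`, `g` gets arbitrarily small far to the left of `t₀`; the fundamental
theorem of calculus from such a point bounds `g t₀`. -/
theorem ofReal_le_lintegral_enorm_of_hasDerivAt {g g' : ℝ → ℝ}
    (hd : ∀ t, HasDerivAt g (g' t) t) (hg : ∫⁻ t, ENNReal.ofReal (g t) ≠ ∞) (t₀ : ℝ) :
    ENNReal.ofReal (g t₀) ≤ ∫⁻ t, ‖g' t‖ₑ := by
  have hg' : g' = deriv g := funext fun t => (hd t).deriv.symm
  by_cases hint : Integrable g'
  swap
  · rw [Integrable, not_and_or, hg'] at hint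
    simp only [measurable_deriv g |>.aestronglyMeasurable, not_true_eq_false, false_or,
      HasFiniteIntegral, not_lt, top_le_iff] at hint
    simp [hg', hint]
  have hbound : ∀ a ≤ t₀, g t₀ ≤ g a + ∫ t, ‖g' t‖ := by
    intro a ha
    have hftc : ∫ t in a..t₀, g' t = g t₀ - g a :=
      intervalIntegral.integral_eq_sub_of_hasDerivAt (fun t _ => hd t) hint.intervalIntegrable
    have hle : ∫ t in a..t₀, g' t ≤ ∫ t, ‖g' t‖ := by
      rw [intervalIntegral.integral_of_le ha]
      exact (le_abs_self _).trans ((norm_integral_le_integral_norm _).trans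
        (setIntegral_le_integral hint.norm (ae_of_all _ fun t => by positivity)))
    linarith
  have hle : g t₀ ≤ ∫ t, ‖g' t‖ := by
    by_contra! hlt
    obtain ⟨a, ha, hga⟩ := exists_le_lt_of_lintegral_ofReal_ne_top hg t₀ (sub_pos.mpr hlt)
    linarith [hbound a ha]
  rw [← ofReal_integral_norm_eq_lintegral_enorm hint]
  exact ENNReal.ofReal_le_ofReal hle

theorem ae_lintegral_update_ne_top {n : ℕ} {V : (Fin (n + 1) → ℝ) → ℝ≥0∞}
    (hV : Measurable V) (hfin : ∫⁻ y, V y ≠ ∞) (i : Fin (n + 1)) :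
    ∀ᵐ y, ∫⁻ t, V (Function.update y i t) ≠ ∞ := by
  set e := MeasurableEquiv.piFinSuccAbove (fun _ => ℝ) i
  have he : MeasurePreserving e volume (volume.prod volume) :=
    measurePreserving_piFinSuccAbove (fun _ => volume) i
  have hVe : Measurable fun q => V (e.symm q) := hV.comp e.symm.measurable
  have hsplit : ∫⁻ z, ∫⁻ t, V (e.symm (t, z)) = ∫⁻ y, V y := by
    rw [← lintegral_prod_symm' _ hVe, ← he.symm.lintegral_comp hV]
  have hae : ∀ᵐ z, ∫⁻ t, V (e.symm (t, z)) ≠ ∞ :=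
    (ae_lt_top' hVe.lintegral_prod_left'.aemeasurable (hsplit ▸ hfin)).mono fun _ h => h.ne
  have hline : ∀ y t, e.symm (t, (e y).2) = Function.update y i t :=
    fun y t => by simp [e, MeasurableEquiv.piFinSuccAbove, Fin.insertNthEquiv]
  filter_upwards [(Measure.quasiMeasurePreserving_snd.comp he.quasiMeasurePreserving).ae hae]
    with y hy
  simpa only [Function.comp_apply, hline] using hy

theorem lintegral_ofReal_rpow_le_of_lineDeriv_le {n : ℕ} {p : ℝ}
    (hp : Real.HolderConjugate (n + 1) p) {v : (Fin (n + 1) → ℝ) → ℝ}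
    {f : (Fin (n + 1) → ℝ) → ℝ≥0∞} (hv : Differentiable ℝ v) (hf : Measurable f)
    (hvf : ∀ y i, ‖fderiv ℝ v y (Pi.single i 1)‖ₑ ≤ f y)
    (hfin : ∫⁻ y, ENNReal.ofReal (v y) ≠ ∞) :
    ∫⁻ y, ENNReal.ofReal (v y) ^ p ≤ (∫⁻ y, f y) ^ p := by
  have hline : ∀ᵐ y, ∀ i, ENNReal.ofReal (v y) ≤ ∫⁻ t, f (Function.update y i t) := by
    rw [ae_all_iff]
    intro i
    filter_upwards [ae_lintegral_update_ne_top hv.continuous.measurable.ennreal_ofReal hfin i]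
      with y hy
    have hd : ∀ t, HasDerivAt (fun t => v (Function.update y i t))
        (fderiv ℝ v (Function.update y i t) (Pi.single i 1)) t := fun t =>
      (hv _).hasFDerivAt.comp_hasDerivAt t (hasDerivAt_update y i t)
    calc ENNReal.ofReal (v y) = ENNReal.ofReal (v (Function.update y i (y i))) := by simp
      _ ≤ _ := ofReal_le_lintegral_enorm_of_hasDerivAt hd hy (y i)
      _ ≤ _ := lintegral_mono fun t => hvf _ i
  have hn : (0 : ℝ) < n := by linarith [hp.lt]
  have hpn : p = (n + 1) * (1 / n) := by
    rw [hp.conjugate_eq, add_sub_cancel_right]; field_simp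
  have hcard : ((Fintype.card (Fin (n + 1)) : ℕ) : ℝ) = n + 1 := by simp
  calc ∫⁻ y, ENNReal.ofReal (v y) ^ p
      = ∫⁻ y, ∏ _i : Fin (n + 1), ENNReal.ofReal (v y) ^ (1 / (n : ℝ)) := by
        refine lintegral_congr fun y => ?_
        rw [Finset.prod_const, Finset.card_univ, Fintype.card_fin, ← ENNReal.rpow_natCast,
          ← ENNReal.rpow_mul, hpn, mul_comm]
        push_cast; rfl
    _ ≤ ∫⁻ y, ∏ i : Fin (n + 1), (∫⁻ t, f (Function.update y i t)) ^ (1 / (n : ℝ)) :=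
        lintegral_mono_ae <| hline.mono fun y hy =>
          Finset.prod_le_prod' fun i _ => ENNReal.rpow_le_rpow (hy i) (by positivity)
    _ ≤ (∫⁻ y, f y) ^ p := by
        have := lintegral_prod_lintegral_pow_le (μ := fun _ : Fin (n + 1) => volume)
          (hcard ▸ hp) hf
        simpa [hcard, ← volume_pi] using this

/-- Mathlib's `eLpNorm_le_eLpNorm_fderiv_of_eq` needs `C¹` and compact support; here mere
differentiability suffices, with integrability of `w⁺` taking the place of compact support. -/
theorem lintegral_ofReal_rpow_le_lintegral_enorm_fderiv {n : ℕ} {p : ℝ}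
    (hp : Real.HolderConjugate (n + 1) p) {w : EuclideanSpace ℝ (Fin (n + 1)) → ℝ}
    (hw : Differentiable ℝ w) (hfin : ∫⁻ x, ENNReal.ofReal (w x) ≠ ∞) :
    ∫⁻ x, ENNReal.ofReal (w x) ^ p ≤ (∫⁻ x, ‖fderiv ℝ w x‖ₑ) ^ p := by
  set L := (PiLp.continuousLinearEquiv 2 ℝ fun _ : Fin (n + 1) => ℝ).symm
  have hL : MeasurePreserving L := PiLp.volume_preserving_toLp (Fin (n + 1))
  have hwm : Measurable w := hw.continuous.measurable
  have hpartial : ∀ y i, ‖fderiv ℝ (fun y => w (L y)) y (Pi.single i 1)‖ₑ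
      ≤ ‖fderiv ℝ w (L y)‖ₑ := by
    intro y i
    change ‖fderiv ℝ (w ∘ L) y _‖ₑ ≤ _
    rw [((hw (L y)).hasFDerivAt.comp y L.hasFDerivAt).fderiv]
    simpa [L, enorm_eq_nnnorm, PiLp.nnnorm_single] using
      (fderiv ℝ w (L y)).le_opENorm (PiLp.single 2 i 1)
  have h := lintegral_ofReal_rpow_le_of_lineDeriv_le (v := fun y => w (L y))
    (f := fun y => ‖fderiv ℝ w (L y)‖ₑ) hp (hw.comp L.differentiable)
    ((measurable_fderiv ℝ w).enorm.comp L.continuous.measurable) hpartial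
    (by rwa [hL.lintegral_comp hwm.ennreal_ofReal])
  rwa [hL.lintegral_comp (hwm.ennreal_ofReal.pow_const p),
    hL.lintegral_comp (measurable_fderiv ℝ w).enorm] at h

theorem enorm_fderiv_pow_four {E : Type*} [NormedAddCommGroup E] [NormedSpace ℝ E]
    {u : E → ℝ} (hu : Differentiable ℝ u) (x : E) :
    ‖fderiv ℝ (fun y => u y ^ 4) x‖ₑ = 4 * (‖u x‖ₑ ^ (3 : ℝ) * ‖fderiv ℝ u x‖ₑ) := by
  change ‖fderiv ℝ ((fun t => t ^ 4) ∘ u) x‖ₑ = _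
  rw [((hasDerivAt_pow 4 (u x)).comp_hasFDerivAt x (hu x).hasFDerivAt).fderiv, enorm_smul,
    enorm_mul, enorm_pow, Real.enorm_natCast, ← ENNReal.rpow_natCast, mul_assoc]
  norm_num

theorem lintegral_enorm_rpow_six_le {u : Ed 3 → ℝ} (hu : Differentiable ℝ u)
    (h4 : ∫⁻ x, ‖u x‖ₑ ^ (4 : ℝ) ≠ ∞) :
    ∫⁻ x, ‖u x‖ₑ ^ (6 : ℝ)
      ≤ (4 * ((∫⁻ x, ‖u x‖ₑ ^ (6 : ℝ)) ^ (1 / 2 : ℝ)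
        * (∫⁻ x, ‖fderiv ℝ u x‖ₑ ^ (2 : ℝ)) ^ (1 / 2 : ℝ))) ^ (3 / 2 : ℝ) := by
  have hofReal : ∀ x, ENNReal.ofReal (u x ^ 4) = ‖u x‖ₑ ^ (4 : ℝ) := fun x => by
    rw [← Real.enorm_of_nonneg (by positivity), enorm_pow, ← ENNReal.rpow_natCast]
    norm_num
  have hGNS := lintegral_ofReal_rpow_le_lintegral_enorm_fderiv (n := 2) (p := 3 / 2)
    (w := fun x => u x ^ 4) (by norm_num [Real.holderConjugate_iff]) (fun x => (hu x).pow 4)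
    (by simpa only [hofReal] using h4)
  have hum : Measurable fun x => ‖u x‖ₑ := hu.continuous.measurable.enorm
  have hDum : Measurable fun x => ‖fderiv ℝ u x‖ₑ := (measurable_fderiv ℝ u).enorm
  have hsqrt : ∀ x, ‖u x‖ₑ ^ (3 : ℝ) * ‖fderiv ℝ u x‖ₑ
      = (‖u x‖ₑ ^ (6 : ℝ)) ^ (1 / 2 : ℝ) * (‖fderiv ℝ u x‖ₑ ^ (2 : ℝ)) ^ (1 / 2 : ℝ) := by
    intro x
    rw [← ENNReal.rpow_mul, ← ENNReal.rpow_mul]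
    norm_num
  calc ∫⁻ x, ‖u x‖ₑ ^ (6 : ℝ)
      = ∫⁻ x, ENNReal.ofReal (u x ^ 4) ^ (3 / 2 : ℝ) := by
        simp_rw [hofReal, ← ENNReal.rpow_mul]; norm_num
    _ ≤ (∫⁻ x, ‖fderiv ℝ (fun y => u y ^ 4) x‖ₑ) ^ (3 / 2 : ℝ) := hGNS
    _ = (4 * ∫⁻ x, (‖u x‖ₑ ^ (6 : ℝ)) ^ (1 / 2 : ℝ)
          * (‖fderiv ℝ u x‖ₑ ^ (2 : ℝ)) ^ (1 / 2 : ℝ)) ^ (3 / 2 : ℝ) := by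
        simp_rw [enorm_fderiv_pow_four hu, hsqrt]
        rw [lintegral_const_mul _ (by fun_prop)]
    _ ≤ _ := by
        gcongr
        exact ENNReal.lintegral_mul_norm_pow_le (hum.pow_const 6).aemeasurable
          (hDum.pow_const 2).aemeasurable (by norm_num) (by norm_num) (by norm_num)

theorem lpInt_nonneg (d : ℕ) (q : ℝ) (u : Ed d → ℝ) : 0 ≤ lpInt d q u :=
  integral_nonneg fun _ => by positivity

theorem gradsq_nonneg (d : ℕ) (u : Ed d → ℝ) : 0 ≤ gradsq d u :=
  integral_nonneg fun _ => by positivity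

theorem l2sq_eq_lpInt_two {d : ℕ} (u : Ed d → ℝ) : l2sq d u = lpInt d 2 u := by
  simp [l2sq, lpInt, sq_abs]

theorem lpInt_eq_toReal_lintegral {d : ℕ} {u : Ed d → ℝ} (hu : AEStronglyMeasurable u)
    {q : ℝ} (hq : 0 ≤ q) : lpInt d q u = (∫⁻ x, ‖u x‖ₑ ^ q).toReal := by
  simpa [lpInt, Real.norm_eq_abs] using integral_norm_rpow_eq_toReal_lintegral hu hq

theorem gradsq_eq_toReal_lintegral {d : ℕ} (u : Ed d → ℝ) :
    gradsq d u = (∫⁻ x, ‖fderiv ℝ u x‖ₑ ^ (2 : ℝ)).toReal := by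
  simpa [gradsq] using integral_norm_rpow_eq_toReal_lintegral
    (measurable_fderiv ℝ u).aestronglyMeasurable (μ := volume) zero_le_two

theorem lpInt_pos {d : ℕ} {u : Ed d → ℝ} {q : ℝ} (hu : MemLp u (ENNReal.ofReal q))
    (hq : 0 < q) (hne : ¬ u =ᵐ[volume] 0) : 0 < lpInt d q u := by
  rw [lpInt_eq_toReal_lintegral hu.aestronglyMeasurable hq.le]
  refine ENNReal.toReal_pos (fun h0 => hne ?_) (lintegral_enorm_rpow_ne_top hu hq)
  filter_upwards [(lintegral_eq_zero_iff' (hu.aestronglyMeasurable.enorm.pow_const q)).mp h0]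
    with x hx
  simpa [ENNReal.rpow_eq_zero_iff, hq, hq.not_gt] using hx

theorem lpInt_le_rpow_mul_rpow {d : ℕ} {u : Ed d → ℝ} {a b θ : ℝ}
    (hua : MemLp u (ENNReal.ofReal a)) (hub : MemLp u (ENNReal.ofReal b)) (ha : 0 < a)
    (hb : 0 < b) (hθ₀ : 0 ≤ θ) (hθ₁ : θ ≤ 1) :
    lpInt d ((1 - θ) * a + θ * b) u ≤ lpInt d a u ^ (1 - θ) * lpInt d b u ^ θ := by
  have hu := hua.aestronglyMeasurable
  rw [lpInt_eq_toReal_lintegral hu (by nlinarith), lpInt_eq_toReal_lintegral hu ha.le,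
    lpInt_eq_toReal_lintegral hu hb.le, ENNReal.toReal_rpow, ENNReal.toReal_rpow,
    ← ENNReal.toReal_mul]
  have hfa := lintegral_enorm_rpow_ne_top hua ha
  have hfb := lintegral_enorm_rpow_ne_top hub hb
  exact ENNReal.toReal_mono (by finiteness)
    (lintegral_rpow_interpolate hu.enorm ha.le hb.le hθ₀ hθ₁)

theorem rpow_one_third_le_of_le_rpow_three_halves {x y : ℝ} (hx : 0 ≤ x) (hy : 0 ≤ y)
    (h : x ≤ (4 * (x ^ (1 / 2 : ℝ) * y ^ (1 / 2 : ℝ))) ^ (3 / 2 : ℝ)) :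
    x ^ (1 / 3 : ℝ) ≤ 16 * y := by
  rcases hx.eq_or_lt with rfl | hx
  · rw [Real.zero_rpow (by norm_num)]; positivity
  have h23 : x ^ (2 / 3 : ℝ) ≤ 4 * (x ^ (1 / 2 : ℝ) * y ^ (1 / 2 : ℝ)) := by
    have := Real.rpow_le_rpow hx.le h (by norm_num : (0 : ℝ) ≤ 2 / 3)
    rwa [← Real.rpow_mul (by positivity), show (3 / 2 : ℝ) * (2 / 3) = 1 by norm_num,
      Real.rpow_one] at this
  have h16 : x ^ (1 / 6 : ℝ) ≤ 4 * y ^ (1 / 2 : ℝ) := by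
    have hsplit : x ^ (2 / 3 : ℝ) = x ^ (1 / 6 : ℝ) * x ^ (1 / 2 : ℝ) := by
      rw [← Real.rpow_add hx]; norm_num
    rw [hsplit, ← mul_assoc, mul_right_comm] at h23
    exact le_of_mul_le_mul_right h23 (by positivity)
  calc x ^ (1 / 3 : ℝ) = (x ^ (1 / 6 : ℝ)) ^ 2 := by
        rw [← Real.rpow_natCast, ← Real.rpow_mul hx.le]; norm_num
    _ ≤ (4 * y ^ (1 / 2 : ℝ)) ^ 2 := by gcongr
    _ = 16 * y := by
        rw [mul_pow, ← Real.sqrt_eq_rpow, Real.sq_sqrt hy]; norm_num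

theorem rpow_lpInt_six_le_gradsq {u : Ed 3 → ℝ} (hu : H1 3 u) (h6 : MemLp u 6 volume) :
    lpInt 3 6 u ^ (1 / 3 : ℝ) ≤ 16 * gradsq 3 u := by
  obtain ⟨h2, hd, hDu⟩ := hu
  have hN2 : ∫⁻ x, ‖u x‖ₑ ^ (2 : ℝ) ≠ ∞ :=
    lintegral_enorm_rpow_ne_top (by simpa using h2) two_pos
  have hN6 : ∫⁻ x, ‖u x‖ₑ ^ (6 : ℝ) ≠ ∞ :=
    lintegral_enorm_rpow_ne_top (by simpa using h6) (by norm_num)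
  have hG : ∫⁻ x, ‖fderiv ℝ u x‖ₑ ^ (2 : ℝ) ≠ ∞ := by
    simpa using lintegral_enorm_rpow_ne_top (f := fun x => ‖fderiv ℝ u x‖)
      (by simpa using hDu) two_pos
  have hN4 : ∫⁻ x, ‖u x‖ₑ ^ (4 : ℝ) ≠ ∞ := by
    have := lintegral_rpow_interpolate (μ := volume) hd.continuous.measurable.enorm.aemeasurable
      zero_le_two (by norm_num : (0 : ℝ) ≤ 6) (by norm_num : (0 : ℝ) ≤ 1 / 2) (by norm_num)
    rw [show (1 - 1 / 2 : ℝ) * 2 + 1 / 2 * 6 = 4 by norm_num] at this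
    exact ne_top_of_le_ne_top (by finiteness) this
  have hS := ENNReal.toReal_mono (by finiteness) (lintegral_enorm_rpow_six_le hd hN4)
  simp only [← ENNReal.toReal_rpow, ENNReal.toReal_mul] at hS
  rw [lpInt_eq_toReal_lintegral hd.continuous.aestronglyMeasurable (by norm_num),
    gradsq_eq_toReal_lintegral]
  exact rpow_one_third_le_of_le_rpow_three_halves ENNReal.toReal_nonneg ENNReal.toReal_nonneg
    (by simpa using hS)

theorem le_of_rpow_le_mul_rpow {x s t C : ℝ} (hx : 0 < x) (hst : s < t) (hC : 0 < C)
    (h : x ^ s ≤ C * x ^ t) : C ^ (-(t - s)⁻¹) ≤ x := by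
  have hts : 0 < t - s := sub_pos.mpr hst
  have hpow : C⁻¹ ≤ x ^ (t - s) := by
    rw [Real.rpow_sub hx, le_div_iff₀ (by positivity), inv_mul_le_iff₀ hC]
    exact h
  calc C ^ (-(t - s)⁻¹) = C⁻¹ ^ (t - s)⁻¹ := by
        rw [Real.rpow_neg hC.le, Real.inv_rpow hC.le]
    _ ≤ (x ^ (t - s)) ^ (t - s)⁻¹ := by gcongr
    _ = x := Real.rpow_rpow_inv hx.le hts.ne'

theorem min_one_le_of_rpow_le_mul_rpow_add {x s t A B : ℝ} (hx : 0 < x) (hst : s < t)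
    (ht : t ≤ 1) (hA : 0 ≤ A) (hB : 0 < B) (h : x ^ s ≤ A * x ^ t + B * x) :
    min 1 ((A + B) ^ (-(t - s)⁻¹)) ≤ x := by
  rcases le_or_gt x 1 with hx1 | hx1
  · refine (min_le_right _ _).trans (le_of_rpow_le_mul_rpow hx hst (by positivity) ?_)
    have hxt : x ≤ x ^ t := by
      simpa using Real.rpow_le_rpow_of_exponent_ge hx hx1 ht
    nlinarith
  · exact (min_le_left _ _).trans hx1.le

/-- uniform (in 0 < μ ≤ 1) lower bound on ‖u‖_{L⁶}⁶ for H¹-bounded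
solutions of K(u) = 0 in dimension 3. -/
theorem stmt15 (p M : ℝ) (hp1 : 7 / 3 < p) (hp2 : p < 5) (hM : 0 < M) :
    ∃ c : ℝ, 0 < c ∧ ∀ μ : ℝ, 0 < μ → μ ≤ 1 →
      ∀ u : Ed 3 → ℝ, H1 3 u → ¬ (u =ᵐ[(volume : Measure (Ed 3))] 0) →
        MemLp u (ENNReal.ofReal (p + 1)) (volume : Measure (Ed 3)) →
        MemLp u 6 (volume : Measure (Ed 3)) →
        Kfun 3 μ p u = 0 →
        Real.sqrt (l2sq 3 u + gradsq 3 u) ≤ M →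
        c ≤ lpInt 3 6 u := by
  set θ := (p - 1) / 4 with hθ
  set a := 3 * (p - 1) / (p + 1)
  have ha : 0 ≤ a := div_nonneg (by linarith) (by linarith)
  have hA : 0 ≤ 8 * a * M ^ ((5 - p) / 2) := by positivity
  refine ⟨min 1 ((8 * a * M ^ ((5 - p) / 2) + 16) ^ (-(θ - 1 / 3)⁻¹)), by positivity, ?_⟩
  intro μ _ hμ1 u hu hne _ h6 hK hbound
  have h6' : MemLp u (ENNReal.ofReal 6) volume := by simpa using h6
  have hl2 : lpInt 3 2 u ≤ M ^ 2 := by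
    rw [← l2sq_eq_lpInt_two]
    nlinarith [Real.sqrt_le_iff.mp hbound, Real.sq_sqrt (by positivity), gradsq_nonneg 3 u]
  have hinterp : lpInt 3 (p + 1) u ≤ M ^ ((5 - p) / 2) * lpInt 3 6 u ^ θ := by
    have h := lpInt_le_rpow_mul_rpow (d := 3) (by simpa using hu.1) h6' two_pos (by norm_num)
      (θ := θ) (by linarith) (by linarith)
    rw [show (1 - θ) * 2 + θ * 6 = p + 1 by rw [hθ]; ring] at h
    refine h.trans (mul_le_mul_of_nonneg_right ?_ (Real.rpow_nonneg (lpInt_nonneg _ _ _) _))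
    calc lpInt 3 2 u ^ (1 - θ) ≤ (M ^ 2) ^ (1 - θ) :=
          Real.rpow_le_rpow (lpInt_nonneg _ _ _) hl2 (by linarith)
      _ = M ^ ((5 - p) / 2) := by
          rw [← Real.rpow_natCast, ← Real.rpow_mul hM.le, hθ]; congr 1; push_cast; ring
  have hK' : 2 * gradsq 3 u = μ * a * lpInt 3 (p + 1) u + 2 * lpInt 3 6 u := by
    norm_num [Kfun, twoStar] at hK
    linarith
  have hμ : μ * a * lpInt 3 (p + 1) u ≤ a * lpInt 3 (p + 1) u := by
    nlinarith [mul_nonneg ha (lpInt_nonneg 3 (p + 1) u)]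
  refine min_one_le_of_rpow_le_mul_rpow_add (lpInt_pos h6' (by norm_num) hne)
    (by linarith) (by linarith) hA (by norm_num) ?_
  calc lpInt 3 6 u ^ (1 / 3 : ℝ) ≤ 16 * gradsq 3 u := rpow_lpInt_six_le_gradsq hu h6
    _ ≤ 8 * a * (M ^ ((5 - p) / 2) * lpInt 3 6 u ^ θ) + 16 * lpInt 3 6 u := by
        nlinarith [mul_le_mul_of_nonneg_left hinterp ha]
    _ = 8 * a * M ^ ((5 - p) / 2) * lpInt 3 6 u ^ θ + 16 * lpInt 3 6 u := by ring
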